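/- Unit partition of energy in d dimensions: for N = n^d with n a power of two, any subtree T of the d-dimensional FFT tree T^full_N, and Ĝ_v the (v,T)-isolating filters obtained by tensoring one-dimensional adaptive aliasing filters, for every ξ ∈ [n]^d one has Σ_{v ∈ Leaves(T)} |Ĝ_v(ξ)|² = 1. -/

import Mathlib

/-!
Write `e_ℓ(a)` for the unimodular phase in the `ℓ`-th factor of `filtD`, so that
`‖Ĝ_v(ξ)‖² = ∏_{ℓ ∈ Anc v} ‖1 + e_ℓ(a)‖² / 4`. The phase `e_ℓ(a)` depends only on the bits
`0, …, ℓ` of the label `a`, and flipping bit `ℓ` changes its sign. Hence at a node with two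
children the weights `‖1 + e‖² / 4` and `‖1 - e‖² / 4` of its children add up to `1`
(parallelogram law), while at a node with one child nothing is multiplied in. By downward
induction on the level, the total weight of the leaves below any node of `T` is `1`; at the
root this is the claim. Only these two properties of the weights enter the induction, so it
works for any weights in a commutative semiring.
-/

open scoped Classical

noncomputable section

/-- `T` is a subtree of the full binary tree of depth `D`: nodes are pairs `(t, a)` of a
level `t ≤ D` and a (flattened) label `a ∈ [2^t]`; `T` contains the root `(0, 0)` and is
closed under taking parents (the parent of `(t+1, a)` is `(t, a % 2^t)`).
For `D = d ⬝ m` this is the `d`-dimensional FFT computation tree `T^full_N` on the universe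
`[n]^d` with `n = 2^m` and `N = n^d`, which peels off one bit of one coordinate at a time
(least significant bit of coordinate `0` first); the flattened label `a` of a node at level
`t` encodes the determined bits of the `d` coordinate labels, coordinate `q` occupying the
bits `q⬝m, …, q⬝m + m − 1` of `a`. -/
def IsSubtree (D : ℕ) (T : Set (ℕ × ℕ)) : Prop :=
  (0, 0) ∈ T ∧ (∀ t a : ℕ, (t + 1, a) ∈ T → (t, a % 2 ^ t) ∈ T) ∧
    ∀ t a : ℕ, (t, a) ∈ T → t ≤ D ∧ a < 2 ^ t

/-- `(t, a)` is a leaf of `T`: it belongs to `T` and none of its two children does. -/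
def IsLeaf (T : Set (ℕ × ℕ)) (t a : ℕ) : Prop :=
  (t, a) ∈ T ∧ (t + 1, a) ∉ T ∧ (t + 1, a + 2 ^ t) ∉ T

/-- `Anc T t a`: the set of levels `ℓ < t` at which the ancestor `(ℓ, a % 2^ℓ)` of the
node `(t, a)` has two children in `T`.  Its cardinality is the weight `w_T(v)`. -/
def Anc (T : Set (ℕ × ℕ)) (t a : ℕ) : Finset ℕ :=
  (Finset.range t).filter fun ℓ =>
    (ℓ + 1, a % 2 ^ ℓ) ∈ T ∧ (ℓ + 1, a % 2 ^ ℓ + 2 ^ ℓ) ∈ T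

/-- The `d`-dimensional adaptive aliasing `(v, T)`-isolating filter in the Fourier domain,
obtained by tensoring one-dimensional adaptive aliasing filters: for a leaf `v = (t, a)`
whose label has coordinates `f_q = (a / 2^{q⬝m}) % 2^m`, and a frequency `ξ ∈ [n]^d`
(given as a function `ξ : ℕ → ℕ` on coordinates `q < d`),
`Ĝ_v(ξ) = 2^{-w_T(v)} ∏_{ℓ ∈ Anc(v,T)} (1 + e^{2πi (ξ_{⌊ℓ/m⌋} − f_{⌊ℓ/m⌋}) / 2^{(ℓ mod m)+1}})`. -/
def filtD (m : ℕ) (T : Set (ℕ × ℕ)) (t a : ℕ) (ξ : ℕ → ℕ) : ℂ :=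
  (2 : ℂ) ^ (-((Anc T t a).card : ℤ)) *
    ∏ ℓ ∈ Anc T t a,
      (1 + Complex.exp (2 * (Real.pi : ℂ) * Complex.I *
        ((ξ (ℓ / m) : ℂ) - ((a / 2 ^ (ℓ / m * m) % 2 ^ m : ℕ) : ℂ)) / 2 ^ (ℓ % m + 1)))

open Finset Complex Real

namespace IsSubtree

variable {D : ℕ} {T : Set (ℕ × ℕ)}

lemma mod_two_pow_lt (hT : IsSubtree D T) {t a : ℕ} (h : (t, a) ∈ T) : a < 2 ^ t :=
  (hT.2.2 t a h).2

lemma le_depth (hT : IsSubtree D T) {t a : ℕ} (h : (t, a) ∈ T) : t ≤ D :=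
  (hT.2.2 t a h).1

lemma mem_of_le (hT : IsSubtree D T) {t a : ℕ} (h : (t, a) ∈ T) {s : ℕ} (hs : s ≤ t) :
    (s, a % 2 ^ s) ∈ T := by
  induction t generalizing a with
  | zero => simpa [Nat.le_zero.mp hs, Nat.mod_one] using hT.1
  | succ t ih =>
    rcases hs.eq_or_lt with rfl | hs
    · rwa [Nat.mod_eq_of_lt (hT.mod_two_pow_lt h)]
    · simpa [Nat.mod_mod_of_dvd _ (pow_dvd_pow 2 (Nat.lt_succ_iff.mp hs))] using
        ih (hT.2.1 t a h) (Nat.lt_succ_iff.mp hs)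

end IsSubtree

lemma mod_two_pow_succ_eq_or (b t : ℕ) :
    b % 2 ^ (t + 1) = b % 2 ^ t ∨ b % 2 ^ (t + 1) = b % 2 ^ t + 2 ^ t := by
  rw [Nat.mod_pow_succ]
  rcases Nat.mod_two_eq_zero_or_one (b / 2 ^ t) with h | h <;> simp [h]

lemma mod_two_pow_mod_succ (b t : ℕ) : b % 2 ^ (t + 1) % 2 ^ t = b % 2 ^ t :=
  Nat.mod_mod_of_dvd _ (pow_dvd_pow 2 t.le_succ)

lemma le_and_mod_two_pow_eq_iff {s b t a : ℕ} (hb : b < 2 ^ s) (ha : a < 2 ^ t) :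
    (t ≤ s ∧ b % 2 ^ t = a) ↔
      ((s, b) = (t, a) ∨ t + 1 ≤ s ∧ b % 2 ^ (t + 1) = a) ∨
        t + 1 ≤ s ∧ b % 2 ^ (t + 1) = a + 2 ^ t := by
  constructor
  · rintro ⟨hts, rfl⟩
    rcases hts.eq_or_lt with rfl | hts
    · simp [Nat.mod_eq_of_lt hb]
    · have := mod_two_pow_succ_eq_or b t
      omega
  · rintro ((h | ⟨hts, h⟩) | ⟨hts, h⟩)
    · simp only [Prod.mk.injEq] at h
      obtain ⟨rfl, rfl⟩ := h
      exact ⟨le_rfl, Nat.mod_eq_of_lt hb⟩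
    · refine ⟨by omega, ?_⟩
      rw [← mod_two_pow_mod_succ, h, Nat.mod_eq_of_lt ha]
    · refine ⟨by omega, ?_⟩
      rw [← mod_two_pow_mod_succ, h, Nat.add_mod_right, Nat.mod_eq_of_lt ha]

def leavesBelow (L : Finset (ℕ × ℕ)) (t a : ℕ) : Finset (ℕ × ℕ) :=
  L.filter fun p => t ≤ p.1 ∧ p.2 % 2 ^ t = a

section leavesBelow

variable {D : ℕ} {T : Set (ℕ × ℕ)} {L : Finset (ℕ × ℕ)}

lemma leavesBelow_zero_zero (L : Finset (ℕ × ℕ)) : leavesBelow L 0 0 = L :=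
  filter_true_of_mem fun p _ => ⟨p.1.zero_le, Nat.mod_one _⟩

lemma leavesBelow_eq_empty (hT : IsSubtree D T) (hL : ∀ p : ℕ × ℕ, p ∈ L ↔ IsLeaf T p.1 p.2)
    {t a : ℕ} (h : (t, a) ∉ T) : leavesBelow L t a = ∅ := by
  refine filter_false_of_mem fun p hp ⟨hts, hpa⟩ => h ?_
  simpa [hpa] using hT.mem_of_le ((hL p).1 hp).1 hts

lemma sum_leavesBelow {M : Type*} [AddCommMonoid M] (hT : IsSubtree D T)
    (hL : ∀ p : ℕ × ℕ, p ∈ L ↔ IsLeaf T p.1 p.2) {t a : ℕ} (ha : a < 2 ^ t)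
    (f : ℕ × ℕ → M) :
    ∑ p ∈ leavesBelow L t a, f p = (if IsLeaf T t a then f (t, a) else 0) +
      ∑ p ∈ leavesBelow L (t + 1) a, f p + ∑ p ∈ leavesBelow L (t + 1) (a + 2 ^ t), f p := by
  have hsplit : leavesBelow L t a = (L.filter (· = (t, a)) ∪ leavesBelow L (t + 1) a) ∪
      leavesBelow L (t + 1) (a + 2 ^ t) := by
    simp only [leavesBelow, ← filter_or]
    exact filter_congr fun p hp => le_and_mod_two_pow_eq_iff (hT.mod_two_pow_lt ((hL p).1 hp).1) ha
  rw [hsplit, sum_union, sum_union, sum_filter, sum_ite_eq']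
  · simp only [hL]
  · exact disjoint_filter.2 fun p _ hp ⟨hts, _⟩ => by simp [hp] at hts
  · refine disjoint_union_left.2 ⟨disjoint_filter.2 fun p _ hp ⟨hts, _⟩ => by simp [hp] at hts,
      disjoint_filter.2 fun p _ ⟨_, h⟩ ⟨_, h'⟩ => ?_⟩
    have : 0 < 2 ^ t := by positivity
    omega

end leavesBelow

def pathWeight {R : Type*} [CommMonoid R] (T : Set (ℕ × ℕ)) (w : ℕ → ℕ → R) (t : ℕ)
    (p : ℕ × ℕ) : R :=
  ∏ ℓ ∈ Ico t p.1,
    if (ℓ + 1, p.2 % 2 ^ ℓ) ∈ T ∧ (ℓ + 1, p.2 % 2 ^ ℓ + 2 ^ ℓ) ∈ T then w ℓ p.2 else 1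

section pathWeight

variable {R : Type*} [CommSemiring R] {D : ℕ} {T : Set (ℕ × ℕ)} {L : Finset (ℕ × ℕ)}
  {w : ℕ → ℕ → R}

lemma prod_anc_eq_pathWeight (p : ℕ × ℕ) :
    ∏ ℓ ∈ Anc T p.1 p.2, w ℓ p.2 = pathWeight T w 0 p := by
  rw [Anc, prod_filter, range_eq_Ico, pathWeight]

lemma pathWeight_self (t a : ℕ) : pathWeight T w t (t, a) = 1 := by
  simp [pathWeight]

lemma pathWeight_of_lt {t : ℕ} {p : ℕ × ℕ} (h : t < p.1) :
    pathWeight T w t p = (if (t + 1, p.2 % 2 ^ t) ∈ T ∧ (t + 1, p.2 % 2 ^ t + 2 ^ t) ∈ T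
      then w t p.2 else 1) * pathWeight T w (t + 1) p :=
  prod_eq_prod_Ico_succ_bot h _

lemma sum_leavesBelow_succ_pathWeight (hT : IsSubtree D T)
    (hL : ∀ p : ℕ × ℕ, p ∈ L ↔ IsLeaf T p.1 p.2)
    (hw : ∀ ℓ < D, ∀ a, w ℓ (a % 2 ^ (ℓ + 1)) = w ℓ a) {t b : ℕ}
    (hchild : (t + 1, b) ∈ T → ∑ p ∈ leavesBelow L (t + 1) b, pathWeight T w (t + 1) p = 1) :
    ∑ p ∈ leavesBelow L (t + 1) b, pathWeight T w t p =
      if (t + 1, b) ∈ T then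
        (if (t + 1, b % 2 ^ t) ∈ T ∧ (t + 1, b % 2 ^ t + 2 ^ t) ∈ T then w t b else 1)
      else 0 := by
  by_cases hb : (t + 1, b) ∈ T
  · have hstep : ∀ p ∈ leavesBelow L (t + 1) b, pathWeight T w t p =
        (if (t + 1, b % 2 ^ t) ∈ T ∧ (t + 1, b % 2 ^ t + 2 ^ t) ∈ T then w t b else 1) *
          pathWeight T w (t + 1) p := fun p hp => by
      obtain ⟨-, htp, hpb⟩ := mem_filter.1 hp
      rw [pathWeight_of_lt htp, ← mod_two_pow_mod_succ, hpb, ← hw t (hT.le_depth hb) p.2, hpb]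
    rw [sum_congr rfl hstep, ← mul_sum, hchild hb, mul_one, if_pos hb]
  · rw [if_neg hb, leavesBelow_eq_empty hT hL hb, sum_empty]

lemma sum_leavesBelow_pathWeight (hT : IsSubtree D T)
    (hL : ∀ p : ℕ × ℕ, p ∈ L ↔ IsLeaf T p.1 p.2)
    (hw : ∀ ℓ < D, ∀ a, w ℓ (a % 2 ^ (ℓ + 1)) = w ℓ a)
    (hw_add : ∀ ℓ < D, ∀ a, w ℓ a + w ℓ (a + 2 ^ ℓ) = 1) {t a : ℕ} (h : (t, a) ∈ T) :
    ∑ p ∈ leavesBelow L t a, pathWeight T w t p = 1 := by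
  have ha := hT.mod_two_pow_lt h
  rw [sum_leavesBelow hT hL ha,
    sum_leavesBelow_succ_pathWeight hT hL hw (sum_leavesBelow_pathWeight hT hL hw hw_add),
    sum_leavesBelow_succ_pathWeight hT hL hw (sum_leavesBelow_pathWeight hT hL hw hw_add),
    pathWeight_self, Nat.add_mod_right, Nat.mod_eq_of_lt ha]
  by_cases h0 : (t + 1, a) ∈ T <;> by_cases h1 : (t + 1, a + 2 ^ t) ∈ T
  · simpa [IsLeaf, h0, h1] using hw_add t (hT.le_depth h0) a
  all_goals simp [IsLeaf, h, h0, h1]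
termination_by D + 1 - t
decreasing_by all_goals have := hT.le_depth h; omega

theorem sum_prod_anc_eq_one (hT : IsSubtree D T) (hL : ∀ p : ℕ × ℕ, p ∈ L ↔ IsLeaf T p.1 p.2)
    (hw : ∀ ℓ < D, ∀ a, w ℓ (a % 2 ^ (ℓ + 1)) = w ℓ a)
    (hw_add : ∀ ℓ < D, ∀ a, w ℓ a + w ℓ (a + 2 ^ ℓ) = 1) :
    ∑ p ∈ L, ∏ ℓ ∈ Anc T p.1 p.2, w ℓ p.2 = 1 := by
  simp only [prod_anc_eq_pathWeight]
  rw [← leavesBelow_zero_zero L]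
  exact sum_leavesBelow_pathWeight hT hL hw hw_add hT.1

end pathWeight

lemma exp_two_pi_I_sub_div_two_pow_congr (x : ℂ) {r u v : ℕ} (h : u ≡ v [MOD 2 ^ (r + 1)]) :
    exp (2 * π * I * (x - u) / 2 ^ (r + 1)) = exp (2 * π * I * (x - v) / 2 ^ (r + 1)) := by
  obtain ⟨k, hk⟩ := h.dvd
  have hu : (u : ℂ) = v - 2 ^ (r + 1) * k := by
    rw [eq_sub_iff_add_eq, ← eq_sub_iff_add_eq']; exact_mod_cast hk.symm
  refine exp_eq_exp_iff_exists_int.2 ⟨k, ?_⟩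
  rw [hu]
  field_simp
  ring

lemma exp_two_pi_I_sub_div_two_pow_add (x : ℂ) (r u : ℕ) :
    exp (2 * π * I * (x - ↑(u + 2 ^ r)) / 2 ^ (r + 1)) =
      -exp (2 * π * I * (x - u) / 2 ^ (r + 1)) := by
  rw [← exp_antiperiodic.sub_eq]
  congr 1
  push_cast
  field_simp
  ring

lemma norm_exp_two_pi_I_natCast_sub_div (x u r : ℕ) :
    ‖exp (2 * π * I * ((x : ℂ) - u) / 2 ^ r)‖ = 1 := by
  rw [show 2 * π * I * ((x : ℂ) - u) / 2 ^ r = ((2 * π * ((x : ℝ) - u) / 2 ^ r : ℝ) : ℂ) * I by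
    push_cast; ring]
  exact norm_exp_ofReal_mul_I _

lemma norm_one_add_sq_add_norm_one_sub_sq {e : ℂ} (he : ‖e‖ = 1) :
    ‖1 + e‖ ^ 2 + ‖1 - e‖ ^ 2 = 4 := by
  rw [parallelogram_law_with_norm ℝ, he, norm_one]
  norm_num

lemma mod_two_pow_div_mod_modEq {m r : ℕ} (hr : r < m) (s a : ℕ) :
    a % 2 ^ (s + r + 1) / 2 ^ s % 2 ^ m ≡ a / 2 ^ s % 2 ^ m [MOD 2 ^ (r + 1)] := by
  have hdvd : 2 ^ (r + 1) ∣ 2 ^ m := pow_dvd_pow 2 hr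
  have hsplit : 2 ^ (s + r + 1) = 2 ^ s * 2 ^ (r + 1) := by rw [← pow_add, add_assoc]
  rw [Nat.ModEq, Nat.mod_mod_of_dvd _ hdvd, Nat.mod_mod_of_dvd _ hdvd, hsplit,
    Nat.mod_mul_right_div_self, Nat.mod_mod]

lemma add_two_pow_div_mod_modEq {m r : ℕ} (hr : r < m) (s a : ℕ) :
    (a + 2 ^ (s + r)) / 2 ^ s % 2 ^ m ≡ a / 2 ^ s % 2 ^ m + 2 ^ r [MOD 2 ^ (r + 1)] := by
  have hdvd : 2 ^ (r + 1) ∣ 2 ^ m := pow_dvd_pow 2 hr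
  rw [pow_add 2 s r, mul_comm (2 ^ s), Nat.add_mul_div_right _ _ (by positivity)]
  exact ((Nat.mod_modEq _ _).of_dvd hdvd).trans
    (((Nat.mod_modEq _ _).of_dvd hdvd).symm.add_right _)

def phase (m : ℕ) (ξ : ℕ → ℕ) (ℓ a : ℕ) : ℂ :=
  exp (2 * π * I * ((ξ (ℓ / m) : ℂ) - ((a / 2 ^ (ℓ / m * m) % 2 ^ m : ℕ) : ℂ)) / 2 ^ (ℓ % m + 1))

section phase

variable {m : ℕ} (ξ : ℕ → ℕ)

lemma phase_mod_two_pow (hm : 0 < m) (ℓ a : ℕ) :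
    phase m ξ ℓ (a % 2 ^ (ℓ + 1)) = phase m ξ ℓ a := by
  have h := mod_two_pow_div_mod_modEq (Nat.mod_lt ℓ hm) (ℓ / m * m) a
  rw [Nat.div_add_mod'] at h
  exact exp_two_pi_I_sub_div_two_pow_congr _ h

lemma phase_add_two_pow (hm : 0 < m) (ℓ a : ℕ) :
    phase m ξ ℓ (a + 2 ^ ℓ) = -phase m ξ ℓ a := by
  have h := add_two_pow_div_mod_modEq (Nat.mod_lt ℓ hm) (ℓ / m * m) a
  rw [Nat.div_add_mod'] at h
  exact (exp_two_pi_I_sub_div_two_pow_congr _ h).trans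
    (exp_two_pi_I_sub_div_two_pow_add _ _ _)

lemma norm_phase (ℓ a : ℕ) : ‖phase m ξ ℓ a‖ = 1 :=
  norm_exp_two_pi_I_natCast_sub_div _ _ _

end phase

lemma sq_norm_filtD (m : ℕ) (T : Set (ℕ × ℕ)) (t a : ℕ) (ξ : ℕ → ℕ) :
    ‖filtD m T t a ξ‖ ^ 2 = ∏ ℓ ∈ Anc T t a, ‖1 + phase m ξ ℓ a‖ ^ 2 / 4 := by
  have hscale : ‖(2 : ℂ) ^ (-((Anc T t a).card : ℤ))‖ ^ 2 = ((4 : ℝ) ^ (Anc T t a).card)⁻¹ := by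
    rw [norm_zpow, Complex.norm_two, zpow_neg, zpow_natCast, inv_pow, ← pow_mul, mul_comm,
      pow_mul]
    norm_num
  rw [filtD, norm_mul, mul_pow, norm_prod, ← prod_pow, prod_div_distrib, prod_const, hscale,
    div_eq_mul_inv, mul_comm]
  rfl

theorem stmt_9_general (m d : ℕ) (T : Set (ℕ × ℕ)) (hT : IsSubtree (d * m) T)
    (L : Finset (ℕ × ℕ)) (hL : ∀ p : ℕ × ℕ, p ∈ L ↔ IsLeaf T p.1 p.2)
    (ξ : ℕ → ℕ) :
    ∑ p ∈ L, ‖filtD m T p.1 p.2 ξ‖ ^ 2 = 1 := by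
  have hm {ℓ : ℕ} (hℓ : ℓ < d * m) : 0 < m := Nat.pos_of_mul_pos_left (Nat.zero_lt_of_lt hℓ)
  simp only [sq_norm_filtD]
  refine sum_prod_anc_eq_one (w := fun ℓ a => ‖1 + phase m ξ ℓ a‖ ^ 2 / 4) hT hL
    (fun ℓ hℓ a => by rw [phase_mod_two_pow ξ (hm hℓ)]) (fun ℓ hℓ a => ?_)
  rw [phase_add_two_pow ξ (hm hℓ), ← sub_eq_add_neg, ← add_div,
    norm_one_add_sq_add_norm_one_sub_sq (norm_phase ξ ℓ a)]
  norm_num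

/-- Unit partition of energy in `d` dimensions: for `N = n^d` with `n = 2^m` a power of two,
any subtree `T` of the `d`-dimensional FFT tree `T^full_N` with set of leaves `L`, and every
frequency `ξ ∈ [n]^d`, one has `∑_{v ∈ Leaves(T)} |Ĝ_v(ξ)|² = 1`. -/
theorem stmt_9 (m d : ℕ) (T : Set (ℕ × ℕ)) (hT : IsSubtree (d * m) T)
    (L : Finset (ℕ × ℕ)) (hL : ∀ p : ℕ × ℕ, p ∈ L ↔ IsLeaf T p.1 p.2)
    (ξ : ℕ → ℕ) (hξ : ∀ q < d, ξ q < 2 ^ m) :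
    ∑ p ∈ L, ‖filtD m T p.1 p.2 ξ‖ ^ 2 = 1 :=
  stmt_9_general m d T hT L hL ξ
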